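/- Let E be a linear functional on real polynomials with E[1] = 1, and let X_i, X_j be variables with μ_i = E[X_i] ∈ (−1,1), and suppose E is defined on all degree-2 monomials. Define the conditioned functionals E⁻[p] = E[p(1−X_i)]/E[1−X_i] and E⁺[p] = E[p(1+X_i)]/E[1+X_i]. Then ((1−μ_i)/2)·(E⁻[X_j])² + ((1+μ_i)/2)·(E⁺[X_j])² − (E[X_j])² = (E[X_i·X_j] − E[X_i]·E[X_j])² / (1 − E[X_i]²). -/
import Mathlib


open MvPolynomial

theorem conditioning_potential_identity {n : ℕ}
    (E : MvPolynomial (Fin n) ℝ →ₗ[ℝ] ℝ) (hE1 : E 1 = 1)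
    (i j : Fin n) (hlb : -1 < E (X i)) (hub : E (X i) < 1) :
    ((1 - E (X i)) / 2) * (E (X j * (1 - X i)) / E (1 - X i)) ^ 2
      + ((1 + E (X i)) / 2) * (E (X j * (1 + X i)) / E (1 + X i)) ^ 2
      - (E (X j)) ^ 2
      = (E (X i * X j) - E (X i) * E (X j)) ^ 2 / (1 - (E (X i)) ^ 2) := by
  have h1 : (X j * (1 - X i) : MvPolynomial (Fin n) ℝ) = X j - X i * X j := by ring
  have h2 : (X j * (1 + X i) : MvPolynomial (Fin n) ℝ) = X j + X i * X j := by ring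
  rw [h1, h2, map_sub, map_add, map_sub, map_add, hE1]
  set μ := E (X i) with hμ
  set a := E (X j)
  set c := E (X i * X j)
  have hm : (1 : ℝ) - μ ≠ 0 := by linarith
  have hp : (1 : ℝ) + μ ≠ 0 := by linarith
  have hsq : (1 : ℝ) - μ ^ 2 ≠ 0 := by nlinarith
  field_simp
  ring
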